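/- arXiv:cs/0601098 — 3 statements merged into one kernel-verified Lean document; each statement's English description precedes it below -/
import Mathlib

section
/- Let f(γ) = (1 - e^{-γ})^M for a positive integer M ≥ 2. Then the equation f(γ) = γ f'(γ) has a unique positive solution γ*. -/
lemma uniq_aux (M : ℕ) {a b : ℝ} (ha : 0 < a) (hab : a < b)
    (hA : Real.exp a = 1 + M * a) (hB : Real.exp b = 1 + M * b) : False := by
  have hb : 0 < b := ha.trans hab
  have h := strictConvexOn_exp.2 (Set.mem_univ (0 : ℝ)) (Set.mem_univ b)
    hb.ne
    (show (0 : ℝ) < 1 - a / b by rw [sub_pos]; exact (div_lt_one hb).2 hab)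
    (show (0 : ℝ) < a / b by positivity)
    (show 1 - a / b + a / b = 1 by ring)
  simp only [smul_eq_mul, mul_zero, zero_add, Real.exp_zero, mul_one] at h
  rw [div_mul_cancel₀ _ hb.ne', hA, hB] at h
  have hq : a / b * (1 + M * b) = a / b + M * a := by
    field_simp
  rw [hq] at h
  linarith

/-- For f(γ) = (1-e^{-γ})^M with M ≥ 2, the equation f(γ) = γ f'(γ) has a unique
positive solution γ*. -/
theorem exists_unique_gamma_star (M : ℕ) (hM : 2 ≤ M) :
    ∃! γ : ℝ, 0 < γ ∧
      (1 - Real.exp (-γ)) ^ M =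
        γ * (M * Real.exp (-γ) * (1 - Real.exp (-γ)) ^ (M - 1)) := by
  -- Reduce the equation to exp γ = 1 + M γ for γ > 0.
  have key : ∀ γ : ℝ, 0 < γ →
      ((1 - Real.exp (-γ)) ^ M =
        γ * (M * Real.exp (-γ) * (1 - Real.exp (-γ)) ^ (M - 1)) ↔
        Real.exp γ = 1 + M * γ) := by
    intro γ hγ
    have hu : 0 < 1 - Real.exp (-γ) := by
      have : Real.exp (-γ) < 1 := Real.exp_lt_one_iff.mpr (by linarith)
      linarith
    have hm : Real.exp (-γ) * Real.exp γ = 1 := by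
      rw [← Real.exp_add]; simp
    have hpow : (1 - Real.exp (-γ)) ^ M =
        (1 - Real.exp (-γ)) * (1 - Real.exp (-γ)) ^ (M - 1) := by
      conv_lhs => rw [show M = (M - 1) + 1 from (Nat.succ_pred_eq_of_pos (by omega)).symm]
      rw [pow_succ]; ring
    constructor
    · intro h
      rw [hpow] at h
      have hne : (1 - Real.exp (-γ)) ^ (M - 1) ≠ 0 := pow_ne_zero _ hu.ne'
      have h3 : (1 - Real.exp (-γ) - γ * (M * Real.exp (-γ))) *
          (1 - Real.exp (-γ)) ^ (M - 1) = 0 := by linear_combination h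
      rcases mul_eq_zero.mp h3 with h4 | h4
      · have h2 : 1 - Real.exp (-γ) = γ * (M * Real.exp (-γ)) := by linarith
        linear_combination Real.exp γ * h2 + (1 + (M : ℝ) * γ) * hm
      · exact absurd h4 hne
    · intro h
      have h2 : 1 - Real.exp (-γ) = γ * (M * Real.exp (-γ)) := by
        linear_combination Real.exp (-γ) * h - hm
      rw [hpow]
      linear_combination (1 - Real.exp (-γ)) ^ (M - 1) * h2
  -- Existence of a root of exp γ = 1 + M γ on [1, 4M].
  have hM1 : (2 : ℝ) ≤ (M : ℝ) := by exact_mod_cast hM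
  have hg1 : Real.exp 1 - (1 + (M : ℝ) * 1) ≤ 0 := by
    have := Real.exp_one_lt_d9
    nlinarith
  have hg2 : 0 ≤ Real.exp (4 * (M : ℝ)) - (1 + (M : ℝ) * (4 * M)) := by
    have h1 : (1 : ℝ) + 2 * M ≤ Real.exp (2 * M) := by
      have := Real.add_one_le_exp (2 * (M : ℝ)); linarith
    have h2 : Real.exp (4 * (M : ℝ)) = Real.exp (2 * M) * Real.exp (2 * M) := by
      rw [← Real.exp_add]; ring_nf
    nlinarith [Real.exp_pos (2 * (M : ℝ))]
  have hcont : ContinuousOn (fun x : ℝ => Real.exp x - (1 + (M : ℝ) * x))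
      (Set.Icc 1 (4 * M)) := by fun_prop
  have hle : (1 : ℝ) ≤ 4 * M := by linarith
  have hivt := intermediate_value_Icc hle hcont
  have h0mem : (0 : ℝ) ∈ Set.Icc (Real.exp 1 - (1 + (M : ℝ) * 1))
      (Real.exp (4 * (M : ℝ)) - (1 + (M : ℝ) * (4 * M))) := ⟨hg1, hg2⟩
  obtain ⟨c, hcmem, hc0⟩ := hivt h0mem
  have hcpos : 0 < c := lt_of_lt_of_le one_pos hcmem.1
  have hcroot : Real.exp c = 1 + (M : ℝ) * c := by
    have : Real.exp c - (1 + (M : ℝ) * c) = 0 := hc0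
    linarith
  refine ⟨c, ⟨hcpos, (key c hcpos).mpr hcroot⟩, ?_⟩
  rintro y ⟨hypos, hy⟩
  have hyroot : Real.exp y = 1 + (M : ℝ) * y := (key y hypos).mp hy
  rcases lt_trichotomy y c with h | h | h
  · exact absurd (uniq_aux M hypos h hyroot hcroot) (by simp)
  · exact h
  · exact absurd (uniq_aux M hcpos h hcroot hyroot) (by simp)
end

section
/- For f(γ) = (1 - e^{-γ})^M with M ≥ 2, the function g(γ) = f(γ)/γ is strictly increasing on (0, γ*) and strictly decreasing on (γ*, ∞), where γ* is the unique positive solution of f(γ) = γ f'(γ). -/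
open Real Set

private lemma psi_strictConcave (M : ℕ) :
    StrictConcaveOn ℝ (Set.univ : Set ℝ)
      (fun x : ℝ => (M : ℝ) * x + 1 - Real.exp x) := by
  have h1 : StrictConcaveOn ℝ (Set.univ : Set ℝ) (fun x : ℝ => -Real.exp x) :=
    strictConvexOn_exp.neg
  have h2 : ConcaveOn ℝ (Set.univ : Set ℝ) (fun x : ℝ => (M : ℝ) * x + 1) := by
    refine ⟨convex_univ, ?_⟩
    intro x _ y _ a b ha hb hab
    simp only [smul_eq_mul]
    nlinarith
  have := h1.add_concaveOn h2
  convert this using 2 with x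
  · rfl
  simp
  ring

private lemma hasDerivAt_g (M : ℕ) (x : ℝ) (hx : x ≠ 0) :
    HasDerivAt (fun γ : ℝ => (1 - Real.exp (-γ)) ^ M / γ)
      (((M : ℝ) * (1 - Real.exp (-x)) ^ (M - 1) * Real.exp (-x) * x
        - (1 - Real.exp (-x)) ^ M) / x ^ 2) x := by
  have h1 : HasDerivAt (fun γ : ℝ => 1 - Real.exp (-γ)) (Real.exp (-x)) x := by
    have := ((hasDerivAt_neg x).exp).const_sub 1
    simpa using this
  have h2 := h1.pow M
  have h3 := h2.div (hasDerivAt_id x) hx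
  convert h3 using 1
  · rfl
  · rfl
  · rfl
  simp [mul_comm]

private lemma num_eq (M : ℕ) (hM : 1 ≤ M) (x : ℝ) :
    (M : ℝ) * (1 - Real.exp (-x)) ^ (M - 1) * Real.exp (-x) * x
        - (1 - Real.exp (-x)) ^ M
      = (1 - Real.exp (-x)) ^ (M - 1) * Real.exp (-x)
          * ((M : ℝ) * x + 1 - Real.exp x) := by
  have h : (1 - Real.exp (-x)) ^ M
      = (1 - Real.exp (-x)) ^ (M - 1) * (1 - Real.exp (-x)) := by
    rw [← pow_succ, Nat.sub_add_cancel hM]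
  have he : Real.exp (-x) * Real.exp x = 1 := by
    rw [← Real.exp_add]; simp
  rw [h]
  linear_combination (1 - Real.exp (-x)) ^ (M - 1) * he

/-- For f(γ) = (1-e^{-γ})^M with M ≥ 2, g(γ) = f(γ)/γ is strictly increasing on
(0, γ*] and strictly decreasing on [γ*, ∞), where γ* is the unique positive
solution of f(γ) = γ f'(γ). -/
theorem g_unimodal (M : ℕ) (hM : 2 ≤ M) (γs : ℝ) (hγs : 0 < γs)
    (heq : (1 - Real.exp (-γs)) ^ M =
      γs * (M * Real.exp (-γs) * (1 - Real.exp (-γs)) ^ (M - 1))) :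
    StrictMonoOn (fun γ : ℝ => (1 - Real.exp (-γ)) ^ M / γ) (Set.Ioc 0 γs) ∧
    StrictAntiOn (fun γ : ℝ => (1 - Real.exp (-γ)) ^ M / γ) (Set.Ici γs) := by
  have hM1 : 1 ≤ M := by omega
  have hpos : ∀ x : ℝ, 0 < x → 0 < 1 - Real.exp (-x) := by
    intro x hx
    have : Real.exp (-x) < 1 := Real.exp_lt_one_iff.mpr (by linarith)
    linarith
  have hps := hpos γs hγs
  -- from heq : 1 - e^{-γs} = γs * M * e^{-γs}
  have hcancel : 1 - Real.exp (-γs) = γs * ((M : ℝ) * Real.exp (-γs)) := by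
    have hp : (1 - Real.exp (-γs)) ^ (M - 1) ≠ 0 := pow_ne_zero _ (ne_of_gt hps)
    have h : (1 - Real.exp (-γs)) ^ (M - 1) * (1 - Real.exp (-γs))
        = (1 - Real.exp (-γs)) ^ (M - 1) * (γs * ((M : ℝ) * Real.exp (-γs))) := by
      rw [← pow_succ, Nat.sub_add_cancel hM1]
      linarith [heq]
    exact mul_left_cancel₀ hp h
  have heγ : Real.exp (-γs) * Real.exp γs = 1 := by
    rw [← Real.exp_add]; simp
  have hψγs : (M : ℝ) * γs + 1 - Real.exp γs = 0 := by
    linear_combination (-Real.exp γs) * hcancel - (1 + (M : ℝ) * γs) * heγ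
  have hψ0 : (M : ℝ) * (0 : ℝ) + 1 - Real.exp 0 = 0 := by simp
  set ψ : ℝ → ℝ := fun x => (M : ℝ) * x + 1 - Real.exp x with hψdef
  have hcc := psi_strictConcave M
  -- ψ > 0 on (0, γs)
  have hψpos : ∀ x : ℝ, 0 < x → x < γs → 0 < ψ x := by
    intro x hx hxγ
    have ha : 0 < (γs - x) / γs := div_pos (by linarith) hγs
    have hb : 0 < x / γs := div_pos hx hγs
    have hab : (γs - x) / γs + x / γs = 1 := by field_simp; ring
    have := hcc.2 (mem_univ (0 : ℝ)) (mem_univ γs) (by linarith)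
      ha hb hab
    simp only [smul_eq_mul] at this
    have hx' : (γs - x) / γs * 0 + x / γs * γs = x := by field_simp; ring
    rw [hx', hψγs] at this
    norm_num at this
    show (0:ℝ) < (M : ℝ) * x + 1 - Real.exp x
    linarith
  -- ψ < 0 on (γs, ∞)
  have hψneg : ∀ x : ℝ, γs < x → ψ x < 0 := by
    intro x hxγ
    have hx0 : 0 < x := lt_trans hγs hxγ
    have ha : 0 < (x - γs) / x := div_pos (by linarith) hx0
    have hb : 0 < γs / x := div_pos hγs hx0
    have hab : (x - γs) / x + γs / x = 1 := by field_simp; ring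
    have := hcc.2 (mem_univ (0 : ℝ)) (mem_univ x) (by linarith)
      ha hb hab
    simp only [smul_eq_mul] at this
    have hx' : (x - γs) / x * 0 + γs / x * x = γs := by field_simp; ring
    rw [hx', hψγs] at this
    norm_num [Real.exp_zero] at this
    show (M : ℝ) * x + 1 - Real.exp x < 0
    nlinarith [this, hb]
  -- continuity
  have hcont : ContinuousOn (fun γ : ℝ => (1 - Real.exp (-γ)) ^ M / γ) {x : ℝ | x ≠ 0} := by
    apply ContinuousOn.div
    · fun_prop
    · fun_prop
    · intro x hx; exact hx
  -- derivative sign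
  have hderiv : ∀ x : ℝ, 0 < x →
      deriv (fun γ : ℝ => (1 - Real.exp (-γ)) ^ M / γ) x
        = ((1 - Real.exp (-x)) ^ (M - 1) * Real.exp (-x) * ψ x) / x ^ 2 := by
    intro x hx
    rw [(hasDerivAt_g M x (ne_of_gt hx)).deriv, num_eq M hM1 x]
  constructor
  · apply strictMonoOn_of_deriv_pos (convex_Ioc 0 γs)
    · exact hcont.mono (fun x hx => ne_of_gt hx.1)
    · intro x hx
      rw [interior_Ioc] at hx
      rw [hderiv x hx.1]
      have h1 := hpos x hx.1
      have h2 := hψpos x hx.1 hx.2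
      exact div_pos (mul_pos (mul_pos (pow_pos h1 _) (Real.exp_pos _)) h2)
        (pow_pos hx.1 2)
  · apply strictAntiOn_of_deriv_neg (convex_Ici γs)
    · exact hcont.mono (fun x hx => ne_of_gt (lt_of_lt_of_le hγs hx))
    · intro x hx
      rw [interior_Ici] at hx
      have hx0 : 0 < x := lt_trans hγs hx
      rw [hderiv x hx0]
      have h1 := hpos x hx0
      have h2 := hψneg x hx
      have hnum : (1 - Real.exp (-x)) ^ (M - 1) * Real.exp (-x) * ψ x < 0 :=
        mul_neg_of_pos_of_neg (mul_pos (pow_pos h1 _) (Real.exp_pos _)) h2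
      exact div_neg_of_neg_of_pos hnum (pow_pos hx0 2)
end

section
/- The quantity Ω* = (M/D)(1 + Dλ + √(1 + D²λ² + 2(1-f*)Dλ))/(2f*) is strictly increasing in λ (for λ > 0) and strictly decreasing in D (for D > 0), given fixed M > 0 and f* ∈ (0,1). -/
/-- The equilibrium rate Ω*(λ, D) = (M/D)(1 + Dλ + √(1 + D²λ² + 2(1-f*)Dλ))/(2f*). -/
noncomputable def OmegaStar (M D lam fs : ℝ) : ℝ :=
  (M / D) * (1 + D * lam + Real.sqrt (1 + D ^ 2 * lam ^ 2 + 2 * (1 - fs) * D * lam)) /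
    (2 * fs)

lemma omegaStar_rw (M lam fs : ℝ) {D : ℝ} (hD : 0 < D)
    (hA : 0 ≤ 1 + D ^ 2 * lam ^ 2 + 2 * (1 - fs) * D * lam) :
    OmegaStar M D lam fs
      = M * (1 / D + lam + Real.sqrt (1 / D ^ 2 + lam ^ 2 + 2 * (1 - fs) * lam / D))
          / (2 * fs) := by
  unfold OmegaStar
  have h2 : 1 / D ^ 2 + lam ^ 2 + 2 * (1 - fs) * lam / D
      = (1 + D ^ 2 * lam ^ 2 + 2 * (1 - fs) * D * lam) * (1 / D) ^ 2 := by
    field_simp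
  rw [h2, Real.sqrt_mul hA, Real.sqrt_sq (by positivity : (0:ℝ) ≤ 1 / D)]
  field_simp

/-- Ω* is strictly increasing in λ on (0,∞) and strictly decreasing in D on (0,∞),
for fixed M > 0 and f* ∈ (0,1). -/
theorem omega_star_monotone (M fs : ℝ) (hM : 0 < M) (hfs0 : 0 < fs) (hfs1 : fs < 1) :
    (∀ D : ℝ, 0 < D → StrictMonoOn (fun lam => OmegaStar M D lam fs) (Set.Ioi 0)) ∧
    (∀ lam : ℝ, 0 ≤ lam → StrictAntiOn (fun D => OmegaStar M D lam fs) (Set.Ioi 0)) := by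
  have hf1 : 0 < 1 - fs := by linarith
  have hf2 : 0 < 2 * fs := by linarith
  constructor
  · intro D hD a ha b hb hab
    simp only [Set.mem_Ioi] at ha hb
    have hMD : 0 < M / D := div_pos hM hD
    have hAa : (0:ℝ) ≤ 1 + D ^ 2 * a ^ 2 + 2 * (1 - fs) * D * a := by
      have h1 : 0 ≤ D ^ 2 * a ^ 2 := by positivity
      have h2 : 0 ≤ 2 * (1 - fs) * D * a := by positivity
      linarith
    have harg : 1 + D ^ 2 * a ^ 2 + 2 * (1 - fs) * D * a
        < 1 + D ^ 2 * b ^ 2 + 2 * (1 - fs) * D * b := by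
      have h1 : D ^ 2 * a ^ 2 < D ^ 2 * b ^ 2 := by
        have h0 : 0 < D ^ 2 := by positivity
        have hsq : a ^ 2 < b ^ 2 := by nlinarith
        nlinarith
      have h2 : 2 * (1 - fs) * D * a < 2 * (1 - fs) * D * b := by
        have : 0 < 2 * (1 - fs) * D := by positivity
        nlinarith
      linarith
    have hsq := Real.sqrt_lt_sqrt hAa harg
    have hin : 1 + D * a + Real.sqrt (1 + D ^ 2 * a ^ 2 + 2 * (1 - fs) * D * a)
        < 1 + D * b + Real.sqrt (1 + D ^ 2 * b ^ 2 + 2 * (1 - fs) * D * b) := by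
      have : D * a < D * b := by nlinarith
      linarith
    simp only [OmegaStar]
    gcongr
  · intro lam hlam a ha b hb hab
    simp only [Set.mem_Ioi] at ha hb
    have hAa : (0:ℝ) ≤ 1 + a ^ 2 * lam ^ 2 + 2 * (1 - fs) * a * lam := by
      have h1 : 0 ≤ a ^ 2 * lam ^ 2 := by positivity
      have h2 : 0 ≤ 2 * (1 - fs) * a * lam := by positivity
      linarith
    have hAb : (0:ℝ) ≤ 1 + b ^ 2 * lam ^ 2 + 2 * (1 - fs) * b * lam := by
      have h1 : 0 ≤ b ^ 2 * lam ^ 2 := by positivity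
      have h2 : 0 ≤ 2 * (1 - fs) * b * lam := by positivity
      linarith
    show OmegaStar M b lam fs < OmegaStar M a lam fs
    rw [omegaStar_rw M lam fs ha hAa, omegaStar_rw M lam fs hb hAb]
    have hBb : (0:ℝ) ≤ 1 / b ^ 2 + lam ^ 2 + 2 * (1 - fs) * lam / b := by
      have h1 : 0 ≤ 1 / b ^ 2 := by positivity
      have h2 : 0 ≤ 2 * (1 - fs) * lam / b := by positivity
      nlinarith [sq_nonneg lam]
    have harg : 1 / b ^ 2 + lam ^ 2 + 2 * (1 - fs) * lam / b
        < 1 / a ^ 2 + lam ^ 2 + 2 * (1 - fs) * lam / a := by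
      have h1 : 1 / b ^ 2 < 1 / a ^ 2 := by
        apply one_div_lt_one_div_of_lt (by positivity)
        nlinarith
      have h2 : 2 * (1 - fs) * lam / b ≤ 2 * (1 - fs) * lam / a := by
        apply div_le_div_of_nonneg_left (by positivity) ha (le_of_lt hab)
      linarith
    have hsq := Real.sqrt_lt_sqrt hBb harg
    have hin : 1 / b + lam + Real.sqrt (1 / b ^ 2 + lam ^ 2 + 2 * (1 - fs) * lam / b)
        < 1 / a + lam + Real.sqrt (1 / a ^ 2 + lam ^ 2 + 2 * (1 - fs) * lam / a) := by
      have : 1 / b < 1 / a := one_div_lt_one_div_of_lt ha hab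
      linarith
    gcongr
end
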